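/- Let Z be a zero-dimensional separable metrizable space, ξ < ω₁, and let D ⊆ P(Z) be selfdual. Set Γ = SU_ξ(D). Then the dual class Γ̌ = {Z \ A : A ∈ Γ} has the separation property: for all A₀, A₁ ∈ Γ̌ with A₀ ∩ A₁ = ∅ there exists C ∈ Γ ∩ Γ̌ with A₀ ⊆ C ⊆ Z \ A₁. -/

import Mathlib

/-!
Write the two disjoint sets as `B₀ᶜ`, `B₁ᶜ` with `B₀, B₁ ∈ Γ`, so that `B₀ ∪ B₁ = Z`. Then the
`Σ⁰_{1+ξ}` sets `Uₙ`, `U'ₙ` witnessing `B₀ = ⋃ₙ Aₙ ∩ Uₙ` and `B₁ = ⋃ₙ A'ₙ ∩ U'ₙ` cover `Z`.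
Splitting each of them into countably many `Δ⁰_{1+ξ}` pieces (here zero-dimensionality is used)
and disjointifying yields a partition `(V_k)` of `Z` into `Σ⁰_{1+ξ}` sets refining this cover:
the generalized reduction property. On a piece inside `Uₙ` the set `B₀ᶜ` agrees with
`Aₙᶜ ∈ D`, on a piece inside `U'ₙ` the set `B₁` agrees with `A'ₙ ∈ D`; gluing these along the
partition gives `C ∈ Γ` with `B₀ᶜ ⊆ C ⊆ B₁`. Because `(V_k)` is a partition, `Cᶜ` is the
separated union of the complements of the glued pieces, which lie in `D` by selfduality, so
`C ∈ Γ̌` as well.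
-/

/-- The additive Borel hierarchy `Σ⁰_ξ` on a topological space, indexed by ordinals. -/
noncomputable def Sigma0 (X : Type*) [TopologicalSpace X] (ξ : Ordinal.{0}) : Set (Set X) :=
  {s | (ξ = 1 ∧ IsOpen s) ∨
    (1 < ξ ∧ ∃ (f : ℕ → Set X) (o : ℕ → Set.Iio ξ),
      (∀ n, 1 ≤ (o n).1) ∧ (∀ n, (f n)ᶜ ∈ Sigma0 X (o n).1) ∧ s = ⋃ n, f n)}
termination_by ξ
decreasing_by exact (o n).2

/-- `SU_ξ(Γ)`: separated unions `⋃ₙ (Aₙ ∩ Uₙ)` with `Aₙ ∈ Γ` and `(Uₙ)` pairwise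
disjoint `Σ⁰_{1+ξ}` sets. -/
noncomputable def SU (X : Type*) [TopologicalSpace X] (ξ : Ordinal.{0})
    (Γ : Set (Set X)) : Set (Set X) :=
  {s | ∃ A U : ℕ → Set X, (∀ n, A n ∈ Γ) ∧ (∀ n, U n ∈ Sigma0 X (1 + ξ)) ∧
    Pairwise (Function.onFun Disjoint U) ∧ s = ⋃ n, A n ∩ U n}

open Set TopologicalSpace Function

namespace Set

variable {α ι : Type*}

theorem mem_iUnion_inter_iff_of_mem {A U : ι → Set α} (hU : Pairwise (Disjoint on U))
    {x : α} {i : ι} (hx : x ∈ U i) : x ∈ ⋃ j, A j ∩ U j ↔ x ∈ A i := by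
  refine ⟨fun h => ?_, fun h => mem_iUnion_of_mem i ⟨h, hx⟩⟩
  obtain ⟨j, hAj, hUj⟩ := mem_iUnion.mp h
  obtain rfl : j = i := by_contra fun hji => disjoint_left.mp (hU hji) hUj hx
  exact hAj

theorem compl_iUnion_inter_of_iUnion_eq_univ {A U : ι → Set α}
    (hU : Pairwise (Disjoint on U)) (hcover : ⋃ i, U i = univ) :
    (⋃ i, A i ∩ U i)ᶜ = ⋃ i, (A i)ᶜ ∩ U i := by
  ext x
  obtain ⟨i, hx⟩ := mem_iUnion.mp (hcover ▸ mem_univ x)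
  rw [mem_compl_iff, mem_iUnion_inter_iff_of_mem hU hx, mem_iUnion_inter_iff_of_mem hU hx,
    mem_compl_iff]

end Set

section Sigma0

variable {X : Type*} [TopologicalSpace X] {η η' : Ordinal.{0}} {s t : Set X}

theorem mem_sigma0_iff :
    s ∈ Sigma0 X η ↔ (η = 1 ∧ IsOpen s) ∨
      (1 < η ∧ ∃ (f : ℕ → Set X) (o : ℕ → Set.Iio η),
        (∀ n, 1 ≤ (o n).1) ∧ (∀ n, (f n)ᶜ ∈ Sigma0 X (o n).1) ∧ s = ⋃ n, f n) := by
  rw [Sigma0]; rfl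

theorem mem_sigma0_one : s ∈ Sigma0 X 1 ↔ IsOpen s := by
  rw [mem_sigma0_iff]
  exact ⟨fun h => h.elim And.right fun h => absurd h.1 (lt_irrefl 1), fun h => Or.inl ⟨rfl, h⟩⟩

theorem iUnion_mem_sigma0 {ι : Type*} [Countable ι] (hη : 1 < η) {f : ι → Set X}
    (o : ι → Ordinal.{0}) (ho : ∀ i, 1 ≤ o i) (hoη : ∀ i, o i < η)
    (hf : ∀ i, (f i)ᶜ ∈ Sigma0 X (o i)) : ⋃ i, f i ∈ Sigma0 X η := by
  refine mem_sigma0_iff.mpr (Or.inr ⟨hη, ?_⟩)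
  rcases isEmpty_or_nonempty ι with _ | _
  · refine ⟨fun _ => ∅, fun _ => ⟨1, hη⟩, fun _ => le_rfl, fun _ => ?_, by simp⟩
    simp [mem_sigma0_one]
  · obtain ⟨g, hg⟩ := exists_surjective_nat ι
    exact ⟨f ∘ g, fun n => ⟨o (g n), hoη (g n)⟩, fun n => ho (g n), fun n => hf (g n),
      (hg.iUnion_comp f).symm⟩

theorem mem_sigma0_of_compl_mem {o : Ordinal.{0}} (ho : 1 ≤ o) (hoη : o < η)
    (hs : sᶜ ∈ Sigma0 X o) : s ∈ Sigma0 X η := by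
  have := iUnion_mem_sigma0 (ι := Unit) (ho.trans_lt hoη) (fun _ => o) (fun _ => ho)
    (fun _ => hoη) (fun _ => hs)
  rwa [iUnion_const] at this

theorem union_mem_sigma0 (hs : s ∈ Sigma0 X η) (ht : t ∈ Sigma0 X η) :
    s ∪ t ∈ Sigma0 X η := by
  rcases mem_sigma0_iff.mp hs with ⟨rfl, hso⟩ | ⟨h1, f, o, ho1, hoc, rfl⟩
  · exact mem_sigma0_one.mpr (hso.union (mem_sigma0_one.mp ht))
  rcases mem_sigma0_iff.mp ht with ⟨rfl, -⟩ | ⟨-, g, o', ho1', hoc', rfl⟩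
  · exact absurd h1 (lt_irrefl _)
  have := iUnion_mem_sigma0 (f := Sum.elim f g) h1
    (Sum.elim (fun n => (o n).1) (fun n => (o' n).1))
    (Sum.forall.mpr ⟨ho1, ho1'⟩) (Sum.forall.mpr ⟨fun n => (o n).2, fun n => (o' n).2⟩)
    (Sum.forall.mpr ⟨hoc, hoc'⟩)
  rwa [iUnion_sum] at this

variable [SecondCountableTopology X] (hbasis : IsTopologicalBasis {s : Set X | IsClopen s})
include hbasis

theorem exists_clopen_seq_of_isOpen (hs : IsOpen s) :
    ∃ f : ℕ → Set X, (∀ n, IsClopen (f n)) ∧ s = ⋃ n, f n := by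
  obtain ⟨𝒮, h𝒮, h𝒮c, rfl⟩ := hbasis.exists_countable_biUnion_of_isOpen hs
  -- adding `∅` makes the family nonempty without changing its union
  obtain ⟨f, hf⟩ := (h𝒮c.insert ∅).exists_eq_range (insert_nonempty _ _)
  refine ⟨f, fun n => ?_, ?_⟩
  · rcases (hf ▸ mem_range_self n : f n ∈ insert ∅ 𝒮) with h | h
    · exact h ▸ isClopen_empty
    · exact h𝒮 h
  · rw [← sUnion_eq_biUnion, ← sUnion_range, ← hf, sUnion_insert, empty_union]

theorem sigma0_mono (hle : η ≤ η') (hs : s ∈ Sigma0 X η) : s ∈ Sigma0 X η' := by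
  rcases mem_sigma0_iff.mp hs with ⟨rfl, hso⟩ | ⟨h1, f, o, ho1, hoc, rfl⟩
  · rcases hle.lt_or_eq with h | rfl
    · obtain ⟨f, hf, rfl⟩ := exists_clopen_seq_of_isOpen hbasis hso
      exact iUnion_mem_sigma0 h (fun _ => 1) (fun _ => le_rfl) (fun _ => h)
        (fun n => mem_sigma0_one.mpr (hf n).compl.isOpen)
    · exact hs
  · exact iUnion_mem_sigma0 (h1.trans_le hle) (fun n => (o n).1) ho1
      (fun n => (o n).2.trans_le hle) hoc

theorem inter_mem_sigma0 (hs : s ∈ Sigma0 X η) (ht : t ∈ Sigma0 X η) :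
    s ∩ t ∈ Sigma0 X η := by
  rcases mem_sigma0_iff.mp hs with ⟨rfl, hso⟩ | ⟨h1, f, o, ho1, hoc, rfl⟩
  · exact mem_sigma0_one.mpr (hso.inter (mem_sigma0_one.mp ht))
  rcases mem_sigma0_iff.mp ht with ⟨rfl, -⟩ | ⟨-, g, o', -, hoc', rfl⟩
  · exact absurd h1 (lt_irrefl _)
  rw [iUnion_inter_iUnion, ← iUnion_prod' fun p => f p.1 ∩ g p.2]
  refine iUnion_mem_sigma0 h1 (fun p => max (o p.1).1 (o' p.2).1)
    (fun p => (ho1 p.1).trans (le_max_left _ _)) (fun p => max_lt (o p.1).2 (o' p.2).2)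
    fun p => ?_
  rw [compl_inter]
  exact union_mem_sigma0 (sigma0_mono hbasis (le_max_left _ _) (hoc _))
    (sigma0_mono hbasis (le_max_right _ _) (hoc' _))

theorem exists_seq_ambiguous_of_mem_sigma0 (hs : s ∈ Sigma0 X η) :
    ∃ T : ℕ → Set X, (∀ n, T n ∈ Sigma0 X η ∧ (T n)ᶜ ∈ Sigma0 X η) ∧ s = ⋃ n, T n := by
  rcases mem_sigma0_iff.mp hs with ⟨rfl, hso⟩ | ⟨h1, f, o, ho1, hoc, rfl⟩
  · obtain ⟨f, hf, rfl⟩ := exists_clopen_seq_of_isOpen hbasis hso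
    exact ⟨f, fun n => ⟨mem_sigma0_one.mpr (hf n).isOpen,
      mem_sigma0_one.mpr (hf n).compl.isOpen⟩, rfl⟩
  · exact ⟨f, fun n => ⟨mem_sigma0_of_compl_mem (ho1 n) (o n).2 (hoc n),
      sigma0_mono hbasis (o n).2.le (hoc n)⟩, rfl⟩

theorem sigma0_generalized_reduction {ι : Type*} [Countable ι] [Nonempty ι] {W : ι → Set X}
    (hW : ∀ i, W i ∈ Sigma0 X η) :
    ∃ (V : ℕ → Set X) (r : ℕ → ι), (∀ k, V k ∈ Sigma0 X η) ∧ (∀ k, V k ⊆ W (r k)) ∧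
      Pairwise (Disjoint on V) ∧ ⋃ k, V k = ⋃ i, W i := by
  choose S hS hWS using fun i => exists_seq_ambiguous_of_mem_sigma0 hbasis (hW i)
  obtain ⟨g, hg⟩ := exists_surjective_nat (ι × ℕ)
  set T : ℕ → Set X := fun k => S (g k).1 (g k).2
  refine ⟨disjointed T, fun k => (g k).1, fun k => ?_, fun k => ?_, disjoint_disjointed T, ?_⟩
  · refine disjointedRec (fun t i ht => ?_) (hS _ _).1
    exact inter_mem_sigma0 hbasis ht (hS _ _).2
  · exact (disjointed_subset T k).trans ((hWS (g k).1).symm ▸ subset_iUnion (S (g k).1) _)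
  · rw [iUnion_disjointed, hg.iUnion_comp fun p => S p.1 p.2, iUnion_prod']
    exact iUnion_congr fun i => (hWS i).symm

end Sigma0

theorem exists_SU_ambiguous_between_of_union_eq_univ {X : Type*} [TopologicalSpace X]
    [SecondCountableTopology X] (hbasis : IsTopologicalBasis {s : Set X | IsClopen s})
    {ξ : Ordinal.{0}} {D : Set (Set X)} (hD : ∀ s ∈ D, sᶜ ∈ D) {B₀ B₁ : Set X}
    (h₀ : B₀ ∈ SU X ξ D) (h₁ : B₁ ∈ SU X ξ D) (hcover : B₀ ∪ B₁ = univ) :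
    ∃ C ∈ SU X ξ D, Cᶜ ∈ SU X ξ D ∧ B₀ᶜ ⊆ C ∧ C ⊆ B₁ := by
  obtain ⟨A, U, hA, hU, hUd, hB₀⟩ := h₀
  obtain ⟨A', U', hA', hU', hU'd, hB₁⟩ := h₁
  obtain ⟨V, r, hV, hVW, hVd, hVU⟩ :=
    sigma0_generalized_reduction hbasis (W := Sum.elim U U') (Sum.forall.mpr ⟨hU, hU'⟩)
  have hVcover : ⋃ k, V k = univ := by
    refine eq_univ_of_univ_subset (hcover ▸ hVU ▸ iUnion_sum ▸ union_subset_union ?_ ?_)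
    · exact hB₀ ▸ iUnion_mono fun n => inter_subset_right
    · exact hB₁ ▸ iUnion_mono fun n => inter_subset_right
  let E : ℕ ⊕ ℕ → Set X := Sum.elim (fun n => (A n)ᶜ) A'
  have hE : ∀ i, E i ∈ D := Sum.forall.mpr ⟨fun n => hD _ (hA n), hA'⟩
  have hEW : ∀ i, ∀ x ∈ Sum.elim U U' i, (x ∉ B₀ → x ∈ E i) ∧ (x ∈ E i → x ∈ B₁) := by
    rintro (n | n) x hx
    · have hx₀ : x ∈ B₀ ↔ x ∈ A n := hB₀ ▸ mem_iUnion_inter_iff_of_mem hUd hx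
      exact ⟨mt hx₀.mpr, fun hxA => (hcover ▸ mem_univ x).resolve_left (mt hx₀.mp hxA)⟩
    · have hx₁ : x ∈ B₁ ↔ x ∈ A' n := hB₁ ▸ mem_iUnion_inter_iff_of_mem hU'd hx
      exact ⟨fun hx₀ => hx₁.mp ((hcover ▸ mem_univ x).resolve_left hx₀), hx₁.mpr⟩
  refine ⟨⋃ k, E (r k) ∩ V k, ⟨E ∘ r, V, fun k => hE (r k), hV, hVd, rfl⟩,
    ⟨fun k => (E (r k))ᶜ, V, fun k => hD _ (hE (r k)), hV, hVd,
      compl_iUnion_inter_of_iUnion_eq_univ hVd hVcover⟩, fun x hx => ?_, fun x hx => ?_⟩ <;>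
  obtain ⟨k, hk⟩ := mem_iUnion.mp (hVcover ▸ mem_univ x)
  · exact (mem_iUnion_inter_iff_of_mem hVd hk).mpr ((hEW _ x (hVW k hk)).1 hx)
  · exact (hEW _ x (hVW k hk)).2 ((mem_iUnion_inter_iff_of_mem hVd hk).mp hx)

theorem statement16_general {Z : Type*} [TopologicalSpace Z]
    [TopologicalSpace.MetrizableSpace Z] [TopologicalSpace.SeparableSpace Z]
    (hbasis : TopologicalSpace.IsTopologicalBasis {s : Set Z | IsClopen s})
    (ξ : Ordinal.{0})
    (D : Set (Set Z)) (hD : D = (fun s : Set Z => sᶜ) '' D) :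
    ∀ A₀ ∈ (fun s : Set Z => sᶜ) '' SU Z ξ D,
      ∀ A₁ ∈ (fun s : Set Z => sᶜ) '' SU Z ξ D, A₀ ∩ A₁ = ∅ →
        ∃ C : Set Z, C ∈ SU Z ξ D ∧ C ∈ (fun s : Set Z => sᶜ) '' SU Z ξ D ∧
          A₀ ⊆ C ∧ C ⊆ A₁ᶜ := by
  have : SecondCountableTopology Z := by
    let := pseudoMetrizableSpacePseudoMetric Z
    exact UniformSpace.secondCountable_of_separable Z
  have hDcompl : ∀ s ∈ D, sᶜ ∈ D := fun s hs => hD ▸ mem_image_of_mem _ hs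
  rintro _ ⟨B₀, h₀, rfl⟩ _ ⟨B₁, h₁, rfl⟩ hdisj
  have hcover : B₀ ∪ B₁ = univ := compl_empty_iff.mp (by rwa [compl_union])
  obtain ⟨C, hC, hCc, hB₀C, hCB₁⟩ :=
    exists_SU_ambiguous_between_of_union_eq_univ hbasis hDcompl h₀ h₁ hcover
  exact ⟨C, hC, ⟨Cᶜ, hCc, compl_compl C⟩, hB₀C, by rwa [compl_compl]⟩

/-- If `D` is selfdual and `Γ = SU_ξ(D)`, then the dual class
`Γ̌ = {Z \ A : A ∈ Γ}` has the separation property: any two disjoint members of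
`Γ̌` can be separated by a set in `Γ ∩ Γ̌`. -/
theorem statement16 {Z : Type*} [TopologicalSpace Z]
    [TopologicalSpace.MetrizableSpace Z] [TopologicalSpace.SeparableSpace Z]
    [Nonempty Z]
    (hbasis : TopologicalSpace.IsTopologicalBasis {s : Set Z | IsClopen s})
    (ξ : Ordinal.{0}) (hξ : ξ.card ≤ Cardinal.aleph0)
    (D : Set (Set Z)) (hD : D = (fun s : Set Z => sᶜ) '' D) :
    ∀ A₀ ∈ (fun s : Set Z => sᶜ) '' SU Z ξ D,
      ∀ A₁ ∈ (fun s : Set Z => sᶜ) '' SU Z ξ D, A₀ ∩ A₁ = ∅ →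
        ∃ C : Set Z, C ∈ SU Z ξ D ∧ C ∈ (fun s : Set Z => sᶜ) '' SU Z ξ D ∧
          A₀ ⊆ C ∧ C ⊆ A₁ᶜ :=
  statement16_general hbasis ξ D hD
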